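/- arXiv:1806.00118 — 3 statements merged into one kernel-verified Lean document; each statement's English description precedes it below -/
import Mathlib

section
/- Let Q be a probability measure on a measurable space (X, 𝒳), let (Θ, 𝒯, π) be a probability space, and let θ ↦ P_θ be a Markov kernel from Θ to X such that P_θ ≪ Q for π-almost every θ, with jointly measurable densities. Let P = ∫ P_θ dπ(θ) be the mixture. Then χ²(P‖Q) + 1 = ∫∫ [ ∫ (dP_θ/dQ)(x) · (dP_{θ'}/dQ)(x) dQ(x) ] dπ(θ) dπ(θ'), i.e., the (shifted) χ²-divergence of a mixture against a simple distribution equals the expectation over two independent copies θ, θ' ~ π of the Q-inner product of the likelihood ratios. -/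
open MeasureTheory Filter
open scoped ENNReal

/-- **Ingster–Suslina.** Let `Q` be a probability measure on `X`, `prior` a
probability measure on `Θ`, and `θ ↦ P θ` a measurable family of measures on `X` such that
for `prior`-almost every `θ`, `P θ` has density `f θ` with respect to `Q` (so `P θ ≪ Q`),
where `f` is jointly measurable. Let `prior.bind P` be the mixture. Then
`χ²(P̄‖Q) + 1 = ∫ (dP̄/dQ)² dQ = ∫∫ (∫ (dP_θ/dQ)(x) (dP_{θ'}/dQ)(x) dQ(x)) dπ(θ) dπ(θ')`,
where both sides may be infinite. -/
theorem chiSq_mixture_vs_simple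
    {X Θ : Type*} [MeasurableSpace X] [MeasurableSpace Θ]
    (Q : Measure X) [IsProbabilityMeasure Q]
    (prior : Measure Θ) [IsProbabilityMeasure prior]
    (P : Θ → Measure X) (hP : Measurable P)
    (f : Θ → X → ℝ≥0∞) (hf : Measurable (Function.uncurry f))
    (hPf : ∀ᵐ θ ∂prior, P θ = Q.withDensity (f θ)) :
    ∫⁻ x, ((prior.bind P).rnDeriv Q x) ^ 2 ∂Q
      = ∫⁻ θ, ∫⁻ θ', (∫⁻ x, f θ x * f θ' x ∂Q) ∂prior ∂prior := by
  set g : X → ℝ≥0∞ := fun x => ∫⁻ θ, f θ x ∂prior with hg_def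
  have hg : Measurable g := Measurable.lintegral_prod_left hf
  have hbind : prior.bind P = Q.withDensity g := by
    ext s hs
    rw [Measure.bind_apply hs hP.aemeasurable, withDensity_apply _ hs]
    calc ∫⁻ θ, P θ s ∂prior = ∫⁻ θ, ∫⁻ x in s, f θ x ∂Q ∂prior := by
          refine lintegral_congr_ae ?_
          filter_upwards [hPf] with θ h
          rw [h, withDensity_apply _ hs]
      _ = ∫⁻ x in s, g x ∂Q := by
          rw [lintegral_lintegral_swap hf.aemeasurable]
  rw [hbind]
  have hrn : (Q.withDensity g).rnDeriv Q =ᵐ[Q] g := Q.rnDeriv_withDensity hg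
  calc ∫⁻ x, ((Q.withDensity g).rnDeriv Q x) ^ 2 ∂Q
      = ∫⁻ x, g x * g x ∂Q := by
        refine lintegral_congr_ae ?_
        filter_upwards [hrn] with x h
        rw [h, sq]
    _ = ∫⁻ x, ∫⁻ θ, f θ x * g x ∂prior ∂Q := by
        refine lintegral_congr fun x => ?_
        have hm : Measurable fun θ => f θ x := hf.comp (measurable_id.prodMk measurable_const)
        rw [lintegral_mul_const _ hm]
    _ = ∫⁻ θ, ∫⁻ x, f θ x * g x ∂Q ∂prior := by
        have m1 : Measurable fun p : X × Θ => f p.2 p.1 * g p.1 :=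
          (hf.comp measurable_swap).mul (hg.comp measurable_fst)
        rw [lintegral_lintegral_swap m1.aemeasurable]
    _ = ∫⁻ θ, ∫⁻ θ', ∫⁻ x, f θ x * f θ' x ∂Q ∂prior ∂prior := by
        refine lintegral_congr fun θ => ?_
        calc ∫⁻ x, f θ x * g x ∂Q = ∫⁻ x, ∫⁻ θ', f θ x * f θ' x ∂prior ∂Q := by
              refine lintegral_congr fun x => ?_
              have hm : Measurable fun θ' => f θ' x := hf.comp (measurable_id.prodMk measurable_const)
              rw [lintegral_const_mul _ hm]
          _ = ∫⁻ θ', ∫⁻ x, f θ x * f θ' x ∂Q ∂prior := by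
              have m2 : Measurable fun p : X × Θ => f θ p.1 * f p.2 p.1 :=
                ((hf.comp (measurable_const.prodMk measurable_fst)).mul
                  (hf.comp measurable_swap))
              rw [lintegral_lintegral_swap m2.aemeasurable]
end

section
/- Consider the binary symmetric community model with n even: σ* is uniform over balanced sign vectors σ ∈ {±1}ⁿ with Σ_i σ_i = 0, and given σ* the entries A_ij (i<j) are independent with law P if σ*_i = σ*_j and law Q otherwise, where P ≪ Q̄ and Q ≪ Q̄ with Q̄ = (P+Q)/2. Let ℙ denote the law of A = (A_ij)_{i<j} and ℚ = Q̄^{⊗ n(n−1)/2} the null law. Set ρ = ∫ (dP − dQ)² / (2 d(P+Q)). Then χ²(ℙ‖ℚ) + 1 = E[ ∏_{i<j} (1 + ρ σ_i σ_j σ̃_i σ̃_j) ] ≤ E[ exp( ρ Σ_{i<j} σ_i σ̃_i σ_j σ̃_j ) ], where σ and σ̃ are two independent copies of σ*. -/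
open MeasureTheory Filter
open scoped ENNReal symmDiff

/-- The index set of unordered pairs `{(i,j) : i < j}` of vertices. -/
abbrev Pairs (n : ℕ) : Type := {p : Fin n × Fin n // p.1 < p.2}

/-- The `±1` encoding of a Boolean community label. -/
noncomputable def pmOne (b : Bool) : ℝ := if b then 1 else -1

/-- The set of balanced community membership vectors (each community has size `n/2`). -/
noncomputable def Bal (n : ℕ) : Finset (Fin n → Bool) :=
  Finset.univ.filter fun σ => 2 * (Finset.univ.filter fun i => σ i = true).card = n

instance {α : Type*} [MeasurableSpace α] (c : Prop) [Decidable c] (P Q : Measure α)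
    [SigmaFinite P] [SigmaFinite Q] : SigmaFinite (if c then P else Q) := by
  split <;> infer_instance

/-- Law of the observations `(A_ij)_{i<j}` given the community labels `σ`:
independent entries, `A_ij ~ P` if `σ_i = σ_j` and `A_ij ~ Q` otherwise. -/
noncomputable def sbmComp {α : Type*} [MeasurableSpace α] (P Q : Measure α)
    [SigmaFinite P] [SigmaFinite Q] {n : ℕ} (σ : Fin n → Bool) : Measure (Pairs n → α) :=
  Measure.pi fun p => if σ p.1.1 = σ p.1.2 then P else Q

/-- The marginal law of the observations `(A_ij)_{i<j}` in the binary symmetric community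
model: `σ*` is uniform over balanced labelings and, given `σ*`, the entries are independent
with law `P` within communities and `Q` across. -/
noncomputable def sbmLaw {α : Type*} [MeasurableSpace α] (P Q : Measure α)
    [SigmaFinite P] [SigmaFinite Q] (n : ℕ) : Measure (Pairs n → α) :=
  ((Bal n).card : ℝ≥0∞)⁻¹ • ∑ σ ∈ Bal n, sbmComp P Q σ

/-- The joint law of `(σ*, (A_ij)_{i<j})` in the binary symmetric community model. -/
noncomputable def sbmJoint {α : Type*} [MeasurableSpace α] (P Q : Measure α)
    [SigmaFinite P] [SigmaFinite Q] (n : ℕ) :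
    Measure ((Fin n → Bool) × (Pairs n → α)) :=
  ((Bal n).card : ℝ≥0∞)⁻¹ • ∑ σ ∈ Bal n, (Measure.dirac σ).prod (sbmComp P Q σ)

/-- The Bernoulli measure with parameter `p` on `Bool`. -/
noncomputable def bernM (p : ℝ) : Measure Bool :=
  ENNReal.ofReal p • Measure.dirac true + ENNReal.ofReal (1 - p) • Measure.dirac false

instance (p : ℝ) : IsFiniteMeasure (bernM p) := by
  constructor
  simp only [bernM, Measure.add_apply, Measure.smul_apply, smul_eq_mul]
  exact ENNReal.add_lt_top.mpr ⟨by finiteness, by finiteness⟩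

namespace SBMAux

lemma lintegral_pi_prod_fin {n : ℕ} {E : Type*} [MeasurableSpace E]
    (μ : Fin n → Measure E) [∀ i, SigmaFinite (μ i)]
    (f : Fin n → E → ℝ≥0∞) (hf : ∀ i, Measurable (f i)) :
    ∫⁻ x, ∏ i, f i (x i) ∂Measure.pi μ = ∏ i, ∫⁻ x, f i x ∂μ i := by
  induction n with
  | zero => simp [lintegral_one, Measure.pi_univ]
  | succ n ih =>
    have h := (measurePreserving_piFinSuccAbove μ 0).symm
    have step := h.lintegral_comp_emb (MeasurableEquiv.measurableEmbedding _)
      (fun x => ∏ i, f i (x i))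
    calc ∫⁻ x, ∏ i, f i (x i) ∂Measure.pi μ
        = ∫⁻ y : E × (Fin n → E),
            ∏ i, f i ((MeasurableEquiv.piFinSuccAbove (fun _ => E) 0).symm y i)
            ∂((μ 0).prod (Measure.pi fun j => μ ((0 : Fin (n + 1)).succAbove j))) :=
          step.symm
      _ = ∫⁻ y : E × (Fin n → E),
            f 0 y.1 * ∏ j : Fin n, f (Fin.succ j) (y.2 j)
            ∂((μ 0).prod (Measure.pi fun j => μ ((0 : Fin (n + 1)).succAbove j))) := by
          refine lintegral_congr fun y => ?_
          simp [MeasurableEquiv.piFinSuccAbove_symm_apply, Fin.prod_univ_succ,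
            Fin.insertNth_zero, Fin.zero_succAbove]
      _ = (∫⁻ x, f 0 x ∂μ 0) * ∫⁻ y, ∏ j : Fin n, f (Fin.succ j) (y j)
            ∂(Measure.pi fun j => μ ((0 : Fin (n + 1)).succAbove j)) :=
          lintegral_prod_mul (hf 0).aemeasurable
            (Finset.measurable_prod _ fun j _ =>
              (hf _).comp (measurable_pi_apply j)).aemeasurable
      _ = ∏ i, ∫⁻ x, f i x ∂μ i := by
          have hfam : (fun j : Fin n => μ ((0 : Fin (n + 1)).succAbove j))
              = fun j : Fin n => μ j.succ := by
            funext j; rw [Fin.zero_succAbove]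
          rw [hfam, ih (fun j => μ j.succ) (fun j => f (Fin.succ j)) (fun j => hf _),
            Fin.prod_univ_succ]

lemma lintegral_pi_prod {ι : Type*} [Fintype ι] {E : Type*} [MeasurableSpace E]
    (μ : ι → Measure E) [∀ i, SigmaFinite (μ i)]
    (f : ι → E → ℝ≥0∞) (hf : ∀ i, Measurable (f i)) :
    ∫⁻ x, ∏ i, f i (x i) ∂Measure.pi μ = ∏ i, ∫⁻ x, f i x ∂μ i := by
  let e := (Fintype.equivFin ι).symm
  have step := (measurePreserving_piCongrLeft μ e).lintegral_comp_emb
    (MeasurableEquiv.measurableEmbedding _) (fun x => ∏ i, f i (x i))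
  rw [← step]
  calc ∫⁻ a, ∏ i, f i ((MeasurableEquiv.piCongrLeft (fun _ => E) e) a i)
        ∂(Measure.pi fun i' => μ (e i'))
      = ∫⁻ a, ∏ j, f (e j) (a j) ∂Measure.pi fun i' => μ (e i') := by
        refine lintegral_congr fun a => ?_
        rw [← e.prod_comp]
        exact Finset.prod_congr rfl fun j _ => by
          rw [MeasurableEquiv.coe_piCongrLeft, Equiv.piCongrLeft_apply_apply]
    _ = ∏ j, ∫⁻ x, f (e j) x ∂μ (e j) :=
        lintegral_pi_prod_fin _ _ (fun j => hf (e j))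
    _ = ∏ i, ∫⁻ x, f i x ∂μ i := e.prod_comp fun i => ∫⁻ x, f i x ∂μ i

lemma pi_eq_withDensity {ι : Type*} [Fintype ι] {E : Type*} [MeasurableSpace E]
    (ν : Measure E) [IsFiniteMeasure ν] (μ : ι → Measure E) [∀ i, IsFiniteMeasure (μ i)]
    (hac : ∀ i, μ i ≪ ν) :
    Measure.pi μ = (Measure.pi fun _ : ι => ν).withDensity
      (fun a => ∏ i, (μ i).rnDeriv ν (a i)) := by
  refine Measure.pi_eq fun s hs => ?_
  rw [withDensity_apply _ (MeasurableSet.univ_pi hs),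
    ← lintegral_indicator (MeasurableSet.univ_pi hs) _]
  have hind : ∀ a : ι → E, (Set.pi Set.univ s).indicator
      (fun a => ∏ i, (μ i).rnDeriv ν (a i)) a
      = ∏ i, (s i).indicator ((μ i).rnDeriv ν) (a i) := by
    intro a
    by_cases ha : a ∈ Set.pi Set.univ s
    · rw [Set.indicator_of_mem ha]
      exact Finset.prod_congr rfl fun i _ =>
        (Set.indicator_of_mem (ha i (Set.mem_univ i)) _).symm
    · rw [Set.indicator_of_notMem ha]
      rw [Set.mem_univ_pi] at ha
      push_neg at ha
      obtain ⟨j, hj⟩ := ha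
      exact (Finset.prod_eq_zero (Finset.mem_univ j) (Set.indicator_of_notMem hj _)).symm
  simp_rw [hind]
  rw [lintegral_pi_prod _ _ (fun i => (Measure.measurable_rnDeriv _ _).indicator (hs i))]
  refine Finset.prod_congr rfl fun i _ => ?_
  rw [lintegral_indicator (hs i) _, Measure.setLIntegral_rnDeriv' (hac i) (hs i)]

lemma withDensity_finsum {α I : Type*} [MeasurableSpace α] (μ : Measure α) (s : Finset I)
    (g : I → α → ℝ≥0∞) (hg : ∀ i, Measurable (g i)) :
    μ.withDensity (fun a => ∑ i ∈ s, g i a) = ∑ i ∈ s, μ.withDensity (g i) := by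
  classical
  induction s using Finset.induction with
  | empty => simp
  | @insert j s hj ih =>
    rw [show (fun a => ∑ i ∈ insert j s, g i a)
        = g j + fun a => ∑ i ∈ s, g i a from funext fun a => Finset.sum_insert hj,
      withDensity_add_left (hg j), ih, Finset.sum_insert hj]

end SBMAux

namespace SBMAux

set_option maxHeartbeats 1000000 in
lemma scalar_core (P Q : Measure ℝ) [IsProbabilityMeasure P] [IsProbabilityMeasure Q]
    (Qbar : Measure ℝ) [SigmaFinite Qbar] (hQbar : Qbar = (2 : ℝ≥0∞)⁻¹ • (P + Q))
    (hPac : P ≪ Qbar) (hQac : Q ≪ Qbar) (ρ : ℝ)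
    (hρ : ρ = ∫ x, (((P.rnDeriv Qbar x).toReal - (Q.rnDeriv Qbar x).toReal) / 2) ^ 2 ∂Qbar) :
    0 ≤ ρ ∧ ρ ≤ 1 ∧
    (∫⁻ x, P.rnDeriv Qbar x * P.rnDeriv Qbar x ∂Qbar = ENNReal.ofReal (1 + ρ)) ∧
    (∫⁻ x, Q.rnDeriv Qbar x * Q.rnDeriv Qbar x ∂Qbar = ENNReal.ofReal (1 + ρ)) ∧
    (∫⁻ x, P.rnDeriv Qbar x * Q.rnDeriv Qbar x ∂Qbar = ENNReal.ofReal (1 - ρ)) ∧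
    (∫⁻ x, Q.rnDeriv Qbar x * P.rnDeriv Qbar x ∂Qbar = ENNReal.ofReal (1 - ρ)) := by
  have hQprob : IsProbabilityMeasure Qbar := by
    constructor
    rw [hQbar]
    simp only [Measure.smul_apply, Measure.add_apply, measure_univ, smul_eq_mul]
    rw [one_add_one_eq_two, ENNReal.inv_mul_cancel two_ne_zero ENNReal.ofNat_ne_top]
  have hPQ : P + Q = (2 : ℝ≥0∞) • Qbar := by
    rw [hQbar, smul_smul, ENNReal.mul_inv_cancel two_ne_zero ENNReal.ofNat_ne_top, one_smul]
  set f := P.rnDeriv Qbar with hf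
  set g := Q.rnDeriv Qbar with hg
  have hfm : Measurable f := Measure.measurable_rnDeriv _ _
  have hgm : Measurable g := Measure.measurable_rnDeriv _ _
  have hsum : ∀ᵐ x ∂Qbar, f x + g x = 2 := by
    have h1 : (P + Q).rnDeriv Qbar =ᵐ[Qbar] f + g := Measure.rnDeriv_add P Q Qbar
    have h2 : (P + Q).rnDeriv Qbar =ᵐ[Qbar] fun _ => 2 := by
      rw [hPQ]
      filter_upwards [Measure.rnDeriv_smul_left_of_ne_top Qbar Qbar
        (r := 2) ENNReal.ofNat_ne_top, Measure.rnDeriv_self Qbar] with x hx h1x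
      rw [hx]
      simp [h1x]
    filter_upwards [h1, h2] with x hx1 hx2
    rw [← hx2, hx1]
    rfl
  set F : ℝ → ℝ := fun x => (f x).toReal with hF
  set G : ℝ → ℝ := fun x => (g x).toReal with hG
  have hFm : Measurable F := hfm.ennreal_toReal
  have hGm : Measurable G := hgm.ennreal_toReal
  have hbasic : ∀ᵐ x ∂Qbar, F x + G x = 2 ∧ f x ≠ ∞ ∧ g x ≠ ∞ := by
    filter_upwards [hsum] with x hx
    have hf_ne : f x ≠ ∞ := by
      intro h
      simp [h] at hx
    have hg_ne : g x ≠ ∞ := by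
      intro h
      simp [h] at hx
    have h2 : (f x + g x).toReal = 2 := by rw [hx]; norm_num
    rw [ENNReal.toReal_add hf_ne hg_ne] at h2
    exact ⟨h2, hf_ne, hg_ne⟩
  -- basic real bounds
  have hFnn : ∀ x, 0 ≤ F x := fun x => ENNReal.toReal_nonneg
  have hGnn : ∀ x, 0 ≤ G x := fun x => ENNReal.toReal_nonneg
  have hb : ∀ᵐ x ∂Qbar, F x ≤ 2 ∧ G x ≤ 2 ∧ ((F x - G x) / 2) ^ 2 ≤ 1 := by
    filter_upwards [hbasic] with x ⟨hx, _, _⟩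
    refine ⟨by linarith [hGnn x], by linarith [hFnn x], ?_⟩
    nlinarith [hFnn x, hGnn x]
  -- integrability
  have hint : ∀ (u : ℝ → ℝ), Measurable u → (∀ᵐ x ∂Qbar, ‖u x‖ ≤ 4) → Integrable u Qbar := by
    intro u hu hb
    exact Integrable.mono' (integrable_const 4) hu.aestronglyMeasurable hb
  have int_h2 : Integrable (fun x => ((F x - G x) / 2) ^ 2) Qbar := by
    refine hint _ (((hFm.sub hGm).div_const 2).pow_const 2) ?_
    filter_upwards [hb] with x ⟨_, _, hx⟩
    rw [Real.norm_eq_abs, abs_of_nonneg (sq_nonneg _)]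
    linarith
  have int_h : Integrable (fun x => (F x - G x) / 2) Qbar := by
    refine hint _ ((hFm.sub hGm).div_const 2) ?_
    filter_upwards [hbasic] with x ⟨hx, _, _⟩
    rw [Real.norm_eq_abs]
    rw [abs_le]
    constructor <;> [skip; skip] <;> nlinarith [hFnn x, hGnn x]
  have int_F : Integrable F Qbar := by
    refine hint _ hFm ?_
    filter_upwards [hb] with x ⟨hx, _, _⟩
    rw [Real.norm_eq_abs, abs_of_nonneg (hFnn x)]; linarith
  have int_G : Integrable G Qbar := by
    refine hint _ hGm ?_
    filter_upwards [hb] with x ⟨_, hx, _⟩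
    rw [Real.norm_eq_abs, abs_of_nonneg (hGnn x)]; linarith
  -- basic integrals
  have hintF : ∫ x, F x ∂Qbar = 1 := by
    rw [hF, hf, Measure.integral_toReal_rnDeriv hPac]; simp
  have hintG : ∫ x, G x ∂Qbar = 1 := by
    rw [hG, hg, Measure.integral_toReal_rnDeriv hQac]; simp
  have hint1 : ∫ x, (1 : ℝ) ∂Qbar = 1 := by simp [measure_univ]
  have hinth : ∫ x, (F x - G x) / 2 ∂Qbar = 0 := by
    rw [integral_div, integral_sub int_F int_G, hintF, hintG]
    norm_num
  -- rho facts
  have hρ0 : 0 ≤ ρ := hρ ▸ integral_nonneg fun x => sq_nonneg _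
  have hρ1 : ρ ≤ 1 := by
    rw [hρ]
    calc ∫ x, ((F x - G x) / 2) ^ 2 ∂Qbar ≤ ∫ x, (1 : ℝ) ∂Qbar := by
          refine integral_mono_ae int_h2 (integrable_const 1) ?_
          filter_upwards [hb] with x ⟨_, _, hx⟩
          exact hx
      _ = 1 := hint1
  -- real integral identities
  have int_A2 : Integrable (fun x => 2 * ((F x - G x) / 2) + ((F x - G x) / 2) ^ 2) Qbar :=
    (int_h.const_mul 2).add int_h2
  have int_An2 : Integrable (fun x => -2 * ((F x - G x) / 2) + ((F x - G x) / 2) ^ 2) Qbar :=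
    (int_h.const_mul (-2)).add int_h2
  have keyFF : ∫ x, F x * F x ∂Qbar = 1 + ρ := by
    have h1 : ∀ᵐ x ∂Qbar, F x * F x
        = 1 + (2 * ((F x - G x) / 2) + ((F x - G x) / 2) ^ 2) := by
      filter_upwards [hbasic] with x ⟨hx, _, _⟩
      have hGx : G x = 2 - F x := by linarith
      rw [hGx]; ring
    rw [integral_congr_ae h1, integral_add (integrable_const 1) int_A2,
      integral_add (int_h.const_mul 2) int_h2, integral_const_mul _ _, hinth, hint1, hρ]
    ring
  have keyGG : ∫ x, G x * G x ∂Qbar = 1 + ρ := by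
    have h1 : ∀ᵐ x ∂Qbar, G x * G x
        = 1 + (-2 * ((F x - G x) / 2) + ((F x - G x) / 2) ^ 2) := by
      filter_upwards [hbasic] with x ⟨hx, _, _⟩
      have hFx : F x = 2 - G x := by linarith
      rw [hFx]; ring
    rw [integral_congr_ae h1, integral_add (integrable_const 1) int_An2,
      integral_add (int_h.const_mul (-2)) int_h2, integral_const_mul _ _, hinth, hint1, hρ]
    ring
  have int_negh2 : Integrable (fun x => -(((F x - G x) / 2) ^ 2)) Qbar := int_h2.neg
  have keyFG : ∫ x, F x * G x ∂Qbar = 1 - ρ := by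
    have h1 : ∀ᵐ x ∂Qbar, F x * G x = 1 + -(((F x - G x) / 2) ^ 2) := by
      filter_upwards [hbasic] with x ⟨hx, _, _⟩
      have hGx : G x = 2 - F x := by linarith
      rw [hGx]; ring
    rw [integral_congr_ae h1, integral_add (integrable_const 1) int_negh2,
      integral_neg, hint1, hρ]
    ring
  -- lintegral conversion
  have lconv : ∀ (u v : ℝ → ℝ≥0∞), Measurable u → Measurable v →
      (∀ᵐ x ∂Qbar, u x ≠ ∞) → (∀ᵐ x ∂Qbar, v x ≠ ∞) →
      Integrable (fun x => (u x).toReal * (v x).toReal) Qbar →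
      ∫⁻ x, u x * v x ∂Qbar = ENNReal.ofReal (∫ x, (u x).toReal * (v x).toReal ∂Qbar) := by
    intro u v hu hv hu' hv' hi
    calc ∫⁻ x, u x * v x ∂Qbar
        = ∫⁻ x, ENNReal.ofReal ((u x).toReal * (v x).toReal) ∂Qbar := by
          refine lintegral_congr_ae ?_
          filter_upwards [hu', hv'] with x hux hvx
          rw [ENNReal.ofReal_mul ENNReal.toReal_nonneg, ENNReal.ofReal_toReal hux,
            ENNReal.ofReal_toReal hvx]
      _ = ENNReal.ofReal (∫ x, (u x).toReal * (v x).toReal ∂Qbar) :=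
          (ofReal_integral_eq_lintegral_ofReal hi
            (Eventually.of_forall fun x =>
              mul_nonneg ENNReal.toReal_nonneg ENNReal.toReal_nonneg)).symm
  have hf_ne : ∀ᵐ x ∂Qbar, f x ≠ ∞ := by filter_upwards [hbasic] with x hx; exact hx.2.1
  have hg_ne : ∀ᵐ x ∂Qbar, g x ≠ ∞ := by filter_upwards [hbasic] with x hx; exact hx.2.2
  have int_FF : Integrable (fun x => F x * F x) Qbar := by
    refine hint _ (hFm.mul hFm) ?_
    filter_upwards [hb] with x ⟨hx, _, _⟩
    rw [Real.norm_eq_abs, abs_of_nonneg (mul_nonneg (hFnn x) (hFnn x))]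
    nlinarith [hFnn x]
  have int_GG : Integrable (fun x => G x * G x) Qbar := by
    refine hint _ (hGm.mul hGm) ?_
    filter_upwards [hb] with x ⟨_, hx, _⟩
    rw [Real.norm_eq_abs, abs_of_nonneg (mul_nonneg (hGnn x) (hGnn x))]
    nlinarith [hGnn x]
  have int_FG : Integrable (fun x => F x * G x) Qbar := by
    refine hint _ (hFm.mul hGm) ?_
    filter_upwards [hb] with x ⟨hx1, hx2, _⟩
    rw [Real.norm_eq_abs, abs_of_nonneg (mul_nonneg (hFnn x) (hGnn x))]
    nlinarith [hFnn x, hGnn x]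
  have int_GF : Integrable (fun x => G x * F x) Qbar := by
    simpa [mul_comm] using int_FG
  refine ⟨hρ0, hρ1, ?_, ?_, ?_, ?_⟩
  · rw [lconv f f hfm hfm hf_ne hf_ne int_FF, keyFF]
  · rw [lconv g g hgm hgm hg_ne hg_ne int_GG, keyGG]
  · rw [lconv f g hfm hgm hf_ne hg_ne int_FG, keyFG]
  · rw [lconv g f hgm hfm hg_ne hf_ne int_GF]
    have : ∫ x, G x * F x ∂Qbar = 1 - ρ := by
      rw [← keyFG]
      exact integral_congr_ae (Eventually.of_forall fun x => mul_comm _ _)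
    rw [this]

end SBMAux

set_option maxHeartbeats 1600000 in
/-- In the binary symmetric community model (with `Q̄ = (P+Q)/2`, planted law
`ℙ = sbmLaw P Q n`, null law `ℚ = Q̄^{⊗ n(n-1)/2}`, and Vincze–Le Cam distance
`ρ = ∫ (dP − dQ)²/(2 d(P+Q))`), the shifted χ²-divergence satisfies
`χ²(ℙ‖ℚ) + 1 = ∫ (dℙ/dℚ)² dℚ = E[∏_{i<j} (1 + ρ σ_i σ_j σ̃_i σ̃_j)]
             ≤ E[exp(ρ ∑_{i<j} σ_i σ̃_i σ_j σ̃_j)]`,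
where `σ, σ̃` are independent copies of the (uniform, balanced) community labels. -/
theorem chiSq_sbm_identity_and_bound
    (n : ℕ) (hn : Even n) (hpos : 0 < n)
    (P Q : Measure ℝ) [IsProbabilityMeasure P] [IsProbabilityMeasure Q]
    (Qbar : Measure ℝ) [SigmaFinite Qbar] (hQbar : Qbar = (2 : ℝ≥0∞)⁻¹ • (P + Q))
    (hPac : P ≪ Qbar) (hQac : Q ≪ Qbar)
    (ρ : ℝ)
    (hρ : ρ = ∫ x, (((P.rnDeriv Qbar x).toReal - (Q.rnDeriv Qbar x).toReal) / 2) ^ 2 ∂Qbar) :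
    (∫⁻ a, ((sbmLaw P Q n).rnDeriv (Measure.pi fun _ : Pairs n => Qbar) a) ^ 2
        ∂(Measure.pi fun _ : Pairs n => Qbar))
      = ENNReal.ofReal ((((Bal n).card : ℝ) ^ 2)⁻¹ *
          ∑ σ ∈ Bal n, ∑ σ' ∈ Bal n, ∏ p : Pairs n,
            (1 + ρ * ((pmOne (σ p.1.1) * pmOne (σ p.1.2)) *
              (pmOne (σ' p.1.1) * pmOne (σ' p.1.2))))) ∧
    (((Bal n).card : ℝ) ^ 2)⁻¹ *
          ∑ σ ∈ Bal n, ∑ σ' ∈ Bal n, ∏ p : Pairs n,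
            (1 + ρ * ((pmOne (σ p.1.1) * pmOne (σ p.1.2)) *
              (pmOne (σ' p.1.1) * pmOne (σ' p.1.2))))
      ≤ (((Bal n).card : ℝ) ^ 2)⁻¹ *
          ∑ σ ∈ Bal n, ∑ σ' ∈ Bal n,
            Real.exp (ρ * ∑ p : Pairs n,
              (pmOne (σ p.1.1) * pmOne (σ p.1.2)) *
                (pmOne (σ' p.1.1) * pmOne (σ' p.1.2))) := by
  classical
  obtain ⟨hρ0, hρ1, hPP, hQQ, hPQ', hQP⟩ :=
    SBMAux.scalar_core P Q Qbar hQbar hPac hQac ρ hρ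
  have hpm : ∀ b c : Bool, pmOne b * pmOne c = if b = c then 1 else -1 := by
    intro b c; cases b <;> cases c <;> norm_num [pmOne]
  have heps : ∀ (σ σ' : Fin n → Bool) (p : Pairs n),
      (pmOne (σ p.1.1) * pmOne (σ p.1.2)) * (pmOne (σ' p.1.1) * pmOne (σ' p.1.2)) = 1 ∨
      (pmOne (σ p.1.1) * pmOne (σ p.1.2)) * (pmOne (σ' p.1.1) * pmOne (σ' p.1.2)) = -1 := by
    intro σ σ' p
    rw [hpm, hpm]
    by_cases h1 : σ p.1.1 = σ p.1.2 <;> by_cases h2 : σ' p.1.1 = σ' p.1.2 <;>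
      norm_num [h1, h2]
  have hterm_nonneg : ∀ (σ σ' : Fin n → Bool) (p : Pairs n),
      0 ≤ 1 + ρ * ((pmOne (σ p.1.1) * pmOne (σ p.1.2)) *
        (pmOne (σ' p.1.1) * pmOne (σ' p.1.2))) := by
    intro σ σ' p
    rcases heps σ σ' p with h | h <;> rw [h] <;> nlinarith
  have hBal : (Bal n).Nonempty := by
    refine ⟨fun i => decide ((i : ℕ) < n / 2), ?_⟩
    rw [Bal, Finset.mem_filter]
    refine ⟨Finset.mem_univ _, ?_⟩
    have h1 : (Finset.univ.filter fun i : Fin n => (decide ((i : ℕ) < n / 2)) = true)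
        = Finset.Iio (⟨n / 2, by omega⟩ : Fin n) := by
      ext i
      simp [Fin.lt_def]
    rw [h1, Fin.card_Iio]
    have h2 : ((⟨n / 2, by omega⟩ : Fin n) : ℕ) = n / 2 := rfl
    rw [h2]
    obtain ⟨k, hk⟩ := hn
    omega
  have hcard0 : (Bal n).card ≠ 0 := hBal.card_pos.ne'
  set c : ℝ≥0∞ := ((Bal n).card : ℝ≥0∞) with hc
  have hc0 : c ≠ 0 := by
    rw [hc]
    exact_mod_cast hcard0
  have hQprob : IsProbabilityMeasure Qbar := by
    constructor
    rw [hQbar]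
    simp only [Measure.smul_apply, Measure.add_apply, measure_univ, smul_eq_mul]
    rw [one_add_one_eq_two, ENNReal.inv_mul_cancel two_ne_zero ENNReal.ofNat_ne_top]
  set ν : Measure (Pairs n → ℝ) := Measure.pi fun _ : Pairs n => Qbar with hν
  set d : (Fin n → Bool) → Pairs n → ℝ → ℝ≥0∞ :=
    fun σ p => ((if σ p.1.1 = σ p.1.2 then P else Q).rnDeriv Qbar) with hd
  have hdm : ∀ σ p, Measurable (d σ p) := fun σ p => Measure.measurable_rnDeriv _ _
  set g : (Fin n → Bool) → (Pairs n → ℝ) → ℝ≥0∞ := fun σ a => ∏ p, d σ p (a p) with hgdef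
  have hgm : ∀ σ, Measurable (g σ) := fun σ =>
    Finset.measurable_prod _ fun p _ => (hdm σ p).comp (measurable_pi_apply p)
  have hcomp : ∀ σ : Fin n → Bool, sbmComp P Q σ = ν.withDensity (g σ) := by
    intro σ
    haveI : ∀ p : Pairs n, IsFiniteMeasure ((fun p : Pairs n =>
        if σ p.1.1 = σ p.1.2 then P else Q) p) := by
      intro p; dsimp only; split <;> infer_instance
    have h := SBMAux.pi_eq_withDensity Qbar
      (fun p : Pairs n => if σ p.1.1 = σ p.1.2 then P else Q)
      (fun p => by split; exacts [hPac, hQac])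
    exact h
  set D : (Pairs n → ℝ) → ℝ≥0∞ := fun a => c⁻¹ * ∑ σ ∈ Bal n, g σ a with hDdef
  have hDm : Measurable D :=
    (Finset.measurable_sum _ fun σ _ => hgm σ).const_mul c⁻¹
  have hlaw : sbmLaw P Q n = ν.withDensity D := by
    have h1 : sbmLaw P Q n = c⁻¹ • ∑ σ ∈ Bal n, ν.withDensity (g σ) := by
      rw [sbmLaw]
      congr 1
      exact Finset.sum_congr rfl fun σ _ => hcomp σ
    rw [h1, ← SBMAux.withDensity_finsum ν (Bal n) g hgm,
      ← withDensity_smul' c⁻¹ _ (ENNReal.inv_ne_top.mpr hc0)]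
    rfl
  have hrn : (sbmLaw P Q n).rnDeriv ν =ᵐ[ν] D := by
    rw [hlaw]
    exact Measure.rnDeriv_withDensity ν hDm
  have hsq : ∫⁻ a, ((sbmLaw P Q n).rnDeriv ν a) ^ 2 ∂ν = ∫⁻ a, D a ^ 2 ∂ν :=
    lintegral_congr_ae (hrn.mono fun a ha => by simp only [ha])
  have key : ∀ (σ σ' : Fin n → Bool) (p : Pairs n),
      ∫⁻ x, d σ p x * d σ' p x ∂Qbar
        = ENNReal.ofReal (1 + ρ * ((pmOne (σ p.1.1) * pmOne (σ p.1.2)) *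
            (pmOne (σ' p.1.1) * pmOne (σ' p.1.2)))) := by
    intro σ σ' p
    by_cases h1 : σ p.1.1 = σ p.1.2 <;> by_cases h2 : σ' p.1.1 = σ' p.1.2
    · simp only [hd, hpm, if_pos h1, if_pos h2, mul_one, one_mul]
      exact hPP
    · simp only [hd, hpm, if_pos h1, if_neg h2, mul_neg, mul_one, one_mul]
      rw [← sub_eq_add_neg]
      exact hPQ'
    · simp only [hd, hpm, if_neg h1, if_pos h2, mul_one, one_mul, mul_neg, neg_one_mul]
      rw [← sub_eq_add_neg]
      exact hQP
    · simp only [hd, hpm, if_neg h1, if_neg h2, neg_mul_neg, mul_one, one_mul]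
      exact hQQ
  have hmeas_sum : ∀ σ : Fin n → Bool,
      Measurable fun a => ∑ σ' ∈ Bal n, g σ a * g σ' a := fun σ =>
    Finset.measurable_sum _ fun σ' _ => (hgm σ).mul (hgm σ')
  have hstep : ∫⁻ a, D a ^ 2 ∂ν
      = c⁻¹ ^ 2 * ∑ σ ∈ Bal n, ∑ σ' ∈ Bal n, ∏ p : Pairs n,
          ∫⁻ x, d σ p x * d σ' p x ∂Qbar := by
    have hDsq : ∀ a, D a ^ 2
        = c⁻¹ ^ 2 * ∑ σ ∈ Bal n, ∑ σ' ∈ Bal n, g σ a * g σ' a := by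
      intro a
      simp only [hDdef]
      rw [mul_pow, pow_two (∑ σ ∈ Bal n, g σ a), Finset.sum_mul_sum]
    calc ∫⁻ a, D a ^ 2 ∂ν
        = ∫⁻ a, c⁻¹ ^ 2 * ∑ σ ∈ Bal n, ∑ σ' ∈ Bal n, g σ a * g σ' a ∂ν :=
          lintegral_congr fun a => hDsq a
      _ = c⁻¹ ^ 2 * ∫⁻ a, ∑ σ ∈ Bal n, ∑ σ' ∈ Bal n, g σ a * g σ' a ∂ν :=
          lintegral_const_mul _ (Finset.measurable_sum _ fun σ _ => hmeas_sum σ)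
      _ = c⁻¹ ^ 2 * ∑ σ ∈ Bal n, ∫⁻ a, ∑ σ' ∈ Bal n, g σ a * g σ' a ∂ν := by
          rw [lintegral_finset_sum _ fun σ _ => hmeas_sum σ]
      _ = c⁻¹ ^ 2 * ∑ σ ∈ Bal n, ∑ σ' ∈ Bal n, ∫⁻ a, g σ a * g σ' a ∂ν := by
          congr 1
          refine Finset.sum_congr rfl fun σ _ => ?_
          rw [lintegral_finset_sum (f := fun σ' a => g σ a * g σ' a) _ fun σ' _ => (hgm σ).mul (hgm σ')]
      _ = c⁻¹ ^ 2 * ∑ σ ∈ Bal n, ∑ σ' ∈ Bal n, ∏ p : Pairs n,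
            ∫⁻ x, d σ p x * d σ' p x ∂Qbar := by
          congr 1
          refine Finset.sum_congr rfl fun σ _ => Finset.sum_congr rfl fun σ' _ => ?_
          have hprod : ∀ a : Pairs n → ℝ,
              g σ a * g σ' a = ∏ p, (d σ p (a p) * d σ' p (a p)) := by
            intro a
            simp only [hgdef]
            exact Finset.prod_mul_distrib.symm
          rw [lintegral_congr hprod]
          exact SBMAux.lintegral_pi_prod _ _ fun p => (hdm σ p).mul (hdm σ' p)
  have hcinv : c⁻¹ ^ 2 = ENNReal.ofReal ((((Bal n).card : ℝ) ^ 2)⁻¹) := by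
    have hcpos : (0 : ℝ) < ((Bal n).card : ℝ) ^ 2 := by
      have : (0 : ℝ) < ((Bal n).card : ℝ) := by
        exact_mod_cast Nat.pos_of_ne_zero hcard0
      positivity
    rw [ENNReal.ofReal_inv_of_pos hcpos, ENNReal.ofReal_pow (Nat.cast_nonneg _),
      ENNReal.ofReal_natCast, ← ENNReal.inv_pow, hc]
  constructor
  · rw [hsq, hstep]
    have h1 : ∀ σ σ' : Fin n → Bool,
        ∏ p : Pairs n, ∫⁻ x, d σ p x * d σ' p x ∂Qbar
          = ENNReal.ofReal (∏ p : Pairs n, (1 + ρ * ((pmOne (σ p.1.1) * pmOne (σ p.1.2)) *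
              (pmOne (σ' p.1.1) * pmOne (σ' p.1.2))))) := by
      intro σ σ'
      rw [ENNReal.ofReal_prod_of_nonneg fun p _ => hterm_nonneg σ σ' p]
      exact Finset.prod_congr rfl fun p _ => key σ σ' p
    calc c⁻¹ ^ 2 * ∑ σ ∈ Bal n, ∑ σ' ∈ Bal n, ∏ p : Pairs n,
            ∫⁻ x, d σ p x * d σ' p x ∂Qbar
        = c⁻¹ ^ 2 * ENNReal.ofReal (∑ σ ∈ Bal n, ∑ σ' ∈ Bal n, ∏ p : Pairs n,
            (1 + ρ * ((pmOne (σ p.1.1) * pmOne (σ p.1.2)) *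
              (pmOne (σ' p.1.1) * pmOne (σ' p.1.2))))) := by
          congr 1
          rw [ENNReal.ofReal_sum_of_nonneg fun σ _ => Finset.sum_nonneg fun σ' _ =>
            Finset.prod_nonneg fun p _ => hterm_nonneg σ σ' p]
          refine Finset.sum_congr rfl fun σ _ => ?_
          rw [ENNReal.ofReal_sum_of_nonneg fun σ' _ =>
            Finset.prod_nonneg fun p _ => hterm_nonneg σ σ' p]
          exact Finset.sum_congr rfl fun σ' _ => h1 σ σ'
      _ = ENNReal.ofReal ((((Bal n).card : ℝ) ^ 2)⁻¹ *
            ∑ σ ∈ Bal n, ∑ σ' ∈ Bal n, ∏ p : Pairs n,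
              (1 + ρ * ((pmOne (σ p.1.1) * pmOne (σ p.1.2)) *
                (pmOne (σ' p.1.1) * pmOne (σ' p.1.2))))) := by
          rw [hcinv, ← ENNReal.ofReal_mul (inv_nonneg.mpr (sq_nonneg _))]
  · have hsum_le : ∀ σ σ' : Fin n → Bool,
        ∏ p : Pairs n, (1 + ρ * ((pmOne (σ p.1.1) * pmOne (σ p.1.2)) *
            (pmOne (σ' p.1.1) * pmOne (σ' p.1.2))))
          ≤ Real.exp (ρ * ∑ p : Pairs n,
              (pmOne (σ p.1.1) * pmOne (σ p.1.2)) *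
                (pmOne (σ' p.1.1) * pmOne (σ' p.1.2))) := by
      intro σ σ'
      calc ∏ p : Pairs n, (1 + ρ * ((pmOne (σ p.1.1) * pmOne (σ p.1.2)) *
              (pmOne (σ' p.1.1) * pmOne (σ' p.1.2))))
          ≤ ∏ p : Pairs n, Real.exp (ρ * ((pmOne (σ p.1.1) * pmOne (σ p.1.2)) *
              (pmOne (σ' p.1.1) * pmOne (σ' p.1.2)))) :=
            Finset.prod_le_prod (fun p _ => hterm_nonneg σ σ' p)
              (fun p _ => by
                have := Real.add_one_le_exp (ρ * ((pmOne (σ p.1.1) * pmOne (σ p.1.2)) *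
                  (pmOne (σ' p.1.1) * pmOne (σ' p.1.2))))
                linarith)
        _ = Real.exp (∑ p : Pairs n, ρ * ((pmOne (σ p.1.1) * pmOne (σ p.1.2)) *
              (pmOne (σ' p.1.1) * pmOne (σ' p.1.2)))) := (Real.exp_sum _ _).symm
        _ = Real.exp (ρ * ∑ p : Pairs n,
              (pmOne (σ p.1.1) * pmOne (σ p.1.2)) *
                (pmOne (σ' p.1.1) * pmOne (σ' p.1.2))) := by
            rw [Finset.mul_sum]
    refine mul_le_mul_of_nonneg_left ?_ (inv_nonneg.mpr (sq_nonneg _))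
    exact Finset.sum_le_sum fun σ _ => Finset.sum_le_sum fun σ' _ => hsum_le σ σ'
end

section
/- Consider the Gaussian binary symmetric community model: n even, σ* uniform over balanced sign vectors in {±1}ⁿ, and A = (μ/√n)(σ*σ*ᵀ − I) + W, where W is a symmetric matrix with zero diagonal and independent N(0,1) entries above the diagonal, independent of σ*. Let σ̂_ML ∈ argmax_σ T(σ) where T(σ) = Σ_{i<j} A_ij σ_i σ_j and the maximum is over balanced sign vectors. If μ > 2√(log 2), then there exists a constant ε > 0 (any ε with μ(1−ε²) > 2√(log 2)) such that P[ |⟨σ̂_ML, σ*⟩| ≥ εn ] → 1 as n → ∞; in fact the complementary probability is e^{−Ω(n)}. Hence the maximum likelihood estimator achieves correlated recovery when μ > 2√(log 2). -/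
open MeasureTheory Filter
open scoped ENNReal symmDiff

open ProbabilityTheory


lemma gaussPDF_shift (m t y : ℝ) :
    gaussianPDFReal m 1 y * Real.exp (t * y)
      = Real.exp (t * m + t ^ 2 / 2) * gaussianPDFReal (m + t) 1 y := by
  simp only [gaussianPDFReal, NNReal.coe_one, mul_one]
  rw [mul_assoc, ← Real.exp_add, mul_comm (Real.exp _), mul_assoc, ← Real.exp_add]
  congr 1
  ring

lemma lintegral_exp_gaussianReal (m t : ℝ) :
    ∫⁻ y, ENNReal.ofReal (Real.exp (t * y)) ∂(gaussianReal m 1)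
      = ENNReal.ofReal (Real.exp (t * m + t ^ 2 / 2)) := by
  rw [gaussianReal_of_var_ne_zero m one_ne_zero,
    lintegral_withDensity_eq_lintegral_mul _ (measurable_gaussianPDF m 1)
      (by fun_prop)]
  have : ∀ y, (gaussianPDF m 1 * fun y => ENNReal.ofReal (Real.exp (t * y))) y
      = ENNReal.ofReal (Real.exp (t * m + t ^ 2 / 2)) * gaussianPDF (m + t) 1 y := by
    intro y
    simp only [Pi.mul_apply, gaussianPDF]
    rw [← ENNReal.ofReal_mul (gaussianPDFReal_nonneg m 1 y),
      ← ENNReal.ofReal_mul (Real.exp_nonneg _), gaussPDF_shift]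
  simp_rw [this]
  rw [lintegral_const_mul _ (measurable_gaussianPDF _ 1),
    lintegral_gaussianPDF_eq_one (m + t) one_ne_zero, mul_one]


lemma lintegral_pi_fin_prod : ∀ {n : ℕ} (μ : Fin n → Measure ℝ),
    (∀ i, IsProbabilityMeasure (μ i)) → ∀ (f : Fin n → ℝ → ℝ≥0∞), (∀ i, Measurable (f i)) →
    ∫⁻ x : Fin n → ℝ, ∏ i, f i (x i) ∂Measure.pi μ = ∏ i, ∫⁻ y, f i y ∂μ i := by
  intro n
  induction n with
  | zero =>
      intro μ hμ f hf
      haveI := fun i => hμ i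
      simp only [Finset.univ_eq_empty, Finset.prod_empty, lintegral_one]
      exact measure_univ
  | succ n ih =>
      intro μ hμ f hf
      haveI := fun i => hμ i
      have h := (measurePreserving_piFinSuccAbove μ 0).symm
      rw [← h.lintegral_comp (f := fun x => ∏ i, f i (x i))
        (Finset.measurable_prod _ (fun i _ => (hf i).comp (measurable_pi_apply i)))]
      have : ∀ p : ℝ × (Fin n → ℝ),
          (∏ i, f i (((MeasurableEquiv.piFinSuccAbove (fun _ => ℝ) 0).symm p) i))
            = f 0 p.1 * ∏ j : Fin n, f j.succ (p.2 j) := by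
        intro p
        simp only [MeasurableEquiv.piFinSuccAbove_symm_apply, Fin.insertNthEquiv,
          Equiv.coe_fn_mk, Fin.insertNth_zero]
        rw [Fin.prod_univ_succ]
        simp [Fin.zero_succAbove]
      simp_rw [this]
      rw [lintegral_prod_mul (f := f 0) (g := fun x : Fin n → ℝ => ∏ j : Fin n, f j.succ (x j))
        (hf 0).aemeasurable
        (Finset.measurable_prod _ (fun j _ => (hf j.succ).comp (measurable_pi_apply j))).aemeasurable]
      rw [ih _ (fun j => hμ _) _ (fun j => hf _), Fin.prod_univ_succ]
      simp [Fin.zero_succAbove]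

lemma lintegral_pi_prod {ι : Type*} [Fintype ι] (μ : ι → Measure ℝ)
    [h : ∀ i, IsProbabilityMeasure (μ i)] (f : ι → ℝ → ℝ≥0∞) (hf : ∀ i, Measurable (f i)) :
    ∫⁻ x : ι → ℝ, ∏ i, f i (x i) ∂Measure.pi μ = ∏ i, ∫⁻ y, f i y ∂μ i := by
  let e := (Fintype.equivFin ι).symm
  have hpre := measurePreserving_piCongrLeft (fun i => μ i) e
  rw [← hpre.lintegral_comp (f := fun x => ∏ i, f i (x i))
    (Finset.measurable_prod _ (fun i _ => (hf i).comp (measurable_pi_apply i)))]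
  have : ∀ x : Fin (Fintype.card ι) → ℝ,
      (∏ i, f i ((MeasurableEquiv.piCongrLeft (fun _ => ℝ) e x) i))
        = ∏ j, f (e j) (x j) := by
    intro x
    rw [← e.prod_comp]
    congr 1; funext j
    rw [MeasurableEquiv.coe_piCongrLeft, Equiv.piCongrLeft_apply_apply]
  simp_rw [this]
  rw [lintegral_pi_fin_prod _ (fun j => inferInstance) _ (fun j => hf _), ← e.prod_comp]


lemma pair_sum_eq {n : ℕ} (x : Fin n → ℝ) :
    2 * ∑ p : Pairs n, x p.1.1 * x p.1.2 = (∑ i, x i) ^ 2 - ∑ i, x i ^ 2 := by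
  classical
  have h0 : ∑ p : Pairs n, x p.1.1 * x p.1.2
      = ∑ q ∈ Finset.univ.filter (fun q : Fin n × Fin n => q.1 < q.2), x q.1 * x q.2 :=
    (Finset.sum_subtype _ (by simp) (fun q : Fin n × Fin n => x q.1 * x q.2)).symm
  have hsq : (∑ i, x i) ^ 2 = ∑ q : Fin n × Fin n, x q.1 * x q.2 := by
    rw [sq, Finset.sum_mul_sum, ← Finset.sum_product', Finset.univ_product_univ]
  have hdiag : ∑ q ∈ (Finset.univ.filter (fun q : Fin n × Fin n => ¬ q.1 < q.2)).filter
        (fun q : Fin n × Fin n => ¬ q.2 < q.1), x q.1 * x q.2 = ∑ i, x i ^ 2 := by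
    refine Finset.sum_nbij' (fun q => q.1) (fun i => (i, i)) ?_ ?_ ?_ ?_ ?_
    · intro a ha; exact Finset.mem_univ _
    · intro a _; simp
    · intro a ha
      simp only [Finset.mem_filter] at ha
      have : a.1 = a.2 := le_antisymm (not_lt.mp ha.2) (not_lt.mp ha.1.2)
      exact Prod.ext rfl this
    · intro a _; rfl
    · intro a ha
      simp only [Finset.mem_filter] at ha
      have : a.1 = a.2 := le_antisymm (not_lt.mp ha.2) (not_lt.mp ha.1.2)
      rw [← this, sq]
  have hswap : ∑ q ∈ Finset.univ.filter (fun q : Fin n × Fin n => q.2 < q.1), x q.1 * x q.2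
      = ∑ q ∈ Finset.univ.filter (fun q : Fin n × Fin n => q.1 < q.2), x q.1 * x q.2 := by
    refine Finset.sum_nbij' Prod.swap Prod.swap ?_ ?_ ?_ ?_ ?_
    · intro a ha; simp only [Finset.mem_filter] at *; exact ⟨Finset.mem_univ _, ha.2⟩
    · intro a ha; simp only [Finset.mem_filter] at *; exact ⟨Finset.mem_univ _, ha.2⟩
    · intro a _; simp
    · intro a _; simp
    · intro a _; simp [mul_comm]
  have hfilter2 : (Finset.univ.filter (fun q : Fin n × Fin n => ¬ q.1 < q.2)).filter
        (fun q : Fin n × Fin n => q.2 < q.1)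
      = Finset.univ.filter (fun q : Fin n × Fin n => q.2 < q.1) := by
    rw [Finset.filter_filter]
    refine Finset.filter_congr ?_
    intro q _
    constructor
    · rintro ⟨_, h⟩; exact h
    · intro h; exact ⟨not_lt.mpr h.le, h⟩
  have key := Finset.sum_filter_add_sum_filter_not Finset.univ
    (fun q : Fin n × Fin n => q.1 < q.2) (fun q => x q.1 * x q.2)
  have key2 := Finset.sum_filter_add_sum_filter_not
    (Finset.univ.filter (fun q : Fin n × Fin n => ¬ q.1 < q.2))
    (fun q : Fin n × Fin n => q.2 < q.1) (fun q => x q.1 * x q.2)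
  rw [hfilter2, hswap, hdiag] at key2
  rw [h0, hsq, ← key, ← key2]
  ring


lemma gaussian_chernoff {ι : Type*} [Fintype ι] (c mv : ι → ℝ) (u : ℝ)
    (hu : ∑ i, c i * mv i ≤ u) (hV : 0 < ∑ i, c i ^ 2) :
    Measure.pi (fun i => gaussianReal (mv i) 1) {A | u ≤ ∑ i, c i * A i}
      ≤ ENNReal.ofReal (Real.exp (-((u - ∑ i, c i * mv i) ^ 2 / (2 * ∑ i, c i ^ 2)))) := by
  set M := ∑ i, c i * mv i with hM
  set V := ∑ i, c i ^ 2 with hVdef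
  set t := (u - M) / V with htdef
  have ht0 : 0 ≤ t := div_nonneg (by linarith) hV.le
  set π := Measure.pi (fun i => gaussianReal (mv i) 1) with hπ
  have hmeas : Measurable fun A : ι → ℝ =>
      ENNReal.ofReal (Real.exp (t * (∑ i, c i * A i - u))) := by
    apply Measurable.ennreal_ofReal
    apply Real.measurable_exp.comp
    apply Measurable.const_mul
    apply Measurable.sub_const
    exact Finset.measurable_sum _ (fun i _ => (measurable_pi_apply i).const_mul _)
  have step1 : π {A | u ≤ ∑ i, c i * A i}
      ≤ ∫⁻ A, ENNReal.ofReal (Real.exp (t * (∑ i, c i * A i - u))) ∂π := by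
    have h1 := mul_meas_ge_le_lintegral₀ (μ := π) hmeas.aemeasurable 1
    rw [one_mul] at h1
    refine le_trans (measure_mono ?_) h1
    intro A hA
    simp only [Set.mem_setOf_eq] at hA ⊢
    have : (1:ℝ) ≤ Real.exp (t * (∑ i, c i * A i - u)) := by
      calc (1:ℝ) = Real.exp 0 := Real.exp_zero.symm
      _ ≤ _ := Real.exp_le_exp.mpr (mul_nonneg ht0 (by linarith))
    calc (1:ℝ≥0∞) = ENNReal.ofReal 1 := by simp
    _ ≤ _ := ENNReal.ofReal_le_ofReal this
  have hint_eq : ∀ A : ι → ℝ, ENNReal.ofReal (Real.exp (t * (∑ i, c i * A i - u)))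
      = ENNReal.ofReal (Real.exp (-(t * u))) * ∏ i, ENNReal.ofReal (Real.exp ((t * c i) * A i)) := by
    intro A
    rw [← ENNReal.ofReal_prod_of_nonneg (fun i _ => Real.exp_nonneg _),
      ← ENNReal.ofReal_mul (Real.exp_nonneg _), ← Real.exp_sum, ← Real.exp_add]
    congr 1
    rw [mul_sub, Finset.mul_sum, sub_eq_neg_add]
    simp_rw [mul_assoc]
  have step2 : ∫⁻ A, ENNReal.ofReal (Real.exp (t * (∑ i, c i * A i - u))) ∂π
      = ENNReal.ofReal (Real.exp (-(t * u))) * ∏ i, ENNReal.ofReal (Real.exp ((t * c i) * mv i + (t * c i) ^ 2 / 2)) := by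
    simp_rw [hint_eq]
    have hm2 : Measurable fun A : ι → ℝ => ∏ i, ENNReal.ofReal (Real.exp (t * c i * A i)) :=
      Finset.measurable_prod _ fun i _ => by fun_prop
    rw [lintegral_const_mul _ hm2]
    congr 1
    rw [lintegral_pi_prod _ (fun i y => ENNReal.ofReal (Real.exp ((t * c i) * y)))
      (fun i => by fun_prop)]
    exact Finset.prod_congr rfl fun i _ => lintegral_exp_gaussianReal (mv i) (t * c i)
  have step3 : ENNReal.ofReal (Real.exp (-(t * u))) * ∏ i, ENNReal.ofReal (Real.exp ((t * c i) * mv i + (t * c i) ^ 2 / 2))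
      = ENNReal.ofReal (Real.exp (-((u - M) ^ 2 / (2 * V)))) := by
    rw [← ENNReal.ofReal_prod_of_nonneg (fun i _ => Real.exp_nonneg _),
      ← ENNReal.ofReal_mul (Real.exp_nonneg _), ← Real.exp_sum, ← Real.exp_add]
    congr 1
    have hsum : ∑ i, ((t * c i) * mv i + (t * c i) ^ 2 / 2) = t * M + t ^ 2 * V / 2 := by
      have h1 : ∑ i, (t * c i) * mv i = t * M := by
        rw [hM, Finset.mul_sum]; exact Finset.sum_congr rfl fun i _ => by ring
      have h2 : ∑ i, (t * c i) ^ 2 / 2 = t ^ 2 * V / 2 := by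
        rw [hVdef, Finset.mul_sum, Finset.sum_div]
        exact Finset.sum_congr rfl fun i _ => by ring
      rw [Finset.sum_add_distrib, h1, h2]
    rw [hsum, htdef]
    field_simp
    ring
  rw [step2, step3] at step1
  exact step1


lemma pmOne_sq (b : Bool) : pmOne b ^ 2 = 1 := by cases b <;> simp [pmOne]

lemma sbmComp_eq_pi (μr : ℝ) {n : ℕ} (σ : Fin n → Bool) :
    sbmComp (gaussianReal μr 1) (gaussianReal (-μr) 1) σ
      = Measure.pi (fun p : Pairs n =>
          gaussianReal (μr * (pmOne (σ p.1.1) * pmOne (σ p.1.2))) 1) := by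
  unfold sbmComp
  congr 1
  funext p
  cases h1 : σ p.1.1 <;> cases h2 : σ p.1.2 <;>
    simp [pmOne, h1, h2] <;> norm_num


set_option maxHeartbeats 1000000 in
lemma per_sigma_bound (μ ε δ : ℝ) (hμpos : 0 < μ) (hδ : 0 < δ)
    (hgap : Real.sqrt (Real.log 2) + δ ≤ μ * (1 - ε ^ 2) / 2 - δ)
    (m : ℕ) (hm : 1 ≤ m) (σh : (Pairs (2*m) → ℝ) → (Fin (2*m) → Bool))
    (hargmax : ∀ A : Pairs (2*m) → ℝ, σh A ∈ Bal (2*m) ∧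
      ∀ σ ∈ Bal (2*m),
        (∑ p : Pairs (2*m), A p * (pmOne (σ p.1.1) * pmOne (σ p.1.2)))
          ≤ ∑ p : Pairs (2*m), A p * (pmOne (σh A p.1.1) * pmOne (σh A p.1.2)))
    (σs : Fin (2*m) → Bool) (hσs : σs ∈ Bal (2*m)) :
    ∃ U : Set (Pairs (2*m) → ℝ), MeasurableSet U ∧
      {A | ¬ (ε * (2*m) ≤ |∑ i, pmOne (σh A i) * pmOne (σs i)|)} ⊆ U ∧
      sbmComp (gaussianReal (μ / Real.sqrt (2*m)) 1)
          (gaussianReal (-(μ / Real.sqrt (2*m))) 1) σs U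
        ≤ ENNReal.ofReal (2 * Real.exp (-(δ^2 * (2*m)))) := by
  classical
  have hκ : (0:ℝ) ≤ Real.sqrt (Real.log 2) := Real.sqrt_nonneg _
  have hκsq : Real.sqrt (Real.log 2) ^ 2 = Real.log 2 :=
    Real.sq_sqrt (Real.log_nonneg one_le_two)
  set g : ℝ := Real.sqrt (Real.log 2) + δ with hgdef
  have hgpos : 0 < g := by positivity
  have hg2 : Real.log 2 + δ ^ 2 ≤ g ^ 2 := by nlinarith
  set nr : ℝ := 2 * (m:ℝ) with hnrdef
  have hnr2 : (2:ℝ) ≤ nr := by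
    have : (1:ℝ) ≤ (m:ℝ) := by exact_mod_cast hm
    simp only [hnrdef]; linarith
  have hnrcast : ((2*m : ℕ) : ℝ) = nr := by push_cast; ring
  set sq : ℝ := Real.sqrt nr with hsqdef
  have hsqpos : 0 < sq := Real.sqrt_pos.mpr (by linarith)
  have hsqsq : sq ^ 2 = nr := Real.sq_sqrt (by linarith)
  set μr : ℝ := μ / sq with hμrdef
  have hμrpos : 0 < μr := div_pos hμpos hsqpos
  set Nr : ℝ := (nr ^ 2 - nr) / 2 with hNrdef
  have hNrpos : 0 < Nr := by simp only [hNrdef]; nlinarith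
  set mv : Pairs (2*m) → ℝ :=
    fun p => μr * (pmOne (σs p.1.1) * pmOne (σs p.1.2)) with hmvdef
  set cf : (Fin (2*m) → Bool) → Pairs (2*m) → ℝ :=
    fun τ p => pmOne (τ p.1.1) * pmOne (τ p.1.2) with hcfdef
  set S : (Fin (2*m) → Bool) → ℝ :=
    fun τ => ∑ i, pmOne (τ i) * pmOne (σs i) with hSdef
  have hone : ∑ i : Fin (2*m), (1:ℝ) = nr := by
    rw [Finset.sum_const, Finset.card_univ, Fintype.card_fin, nsmul_eq_mul, mul_one, hnrcast]
  have hcard : ∑ p : Pairs (2*m), (1:ℝ) = Nr := by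
    have h := pair_sum_eq (n := 2*m) (fun _ => (1:ℝ))
    simp only [mul_one, one_pow] at h
    rw [hone] at h
    simp only [hNrdef]; linarith
  have hVsum : ∀ τ, ∑ p : Pairs (2*m), (cf τ p) ^ 2 = Nr := by
    intro τ
    rw [← hcard]
    refine Finset.sum_congr rfl fun p _ => ?_
    simp only [hcfdef, mul_pow, pmOne_sq, one_mul]
  have hMsum : ∀ τ, ∑ p : Pairs (2*m), cf τ p * mv p = μr * ((S τ ^ 2 - nr) / 2) := by
    intro τ
    have hx2 : ∑ i : Fin (2*m), (pmOne (τ i) * pmOne (σs i)) ^ 2 = nr := by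
      rw [← hone]
      exact Finset.sum_congr rfl fun i _ => by
        rw [mul_pow, pmOne_sq, pmOne_sq, one_mul]
    have h1 : ∑ p : Pairs (2*m), cf τ p * mv p
        = μr * ∑ p : Pairs (2*m),
            (fun i => pmOne (τ i) * pmOne (σs i)) p.1.1
              * (fun i => pmOne (τ i) * pmOne (σs i)) p.1.2 := by
      rw [Finset.mul_sum]
      exact Finset.sum_congr rfl fun p _ => by simp only [hcfdef, hmvdef]; ring
    have h2 := pair_sum_eq (n := 2*m) (fun i => pmOne (τ i) * pmOne (σs i))
    rw [hx2] at h2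
    rw [h1]
    have h3 : ∑ p : Pairs (2*m),
        (fun i => pmOne (τ i) * pmOne (σs i)) p.1.1
          * (fun i => pmOne (τ i) * pmOne (σs i)) p.1.2
        = (S τ ^ 2 - nr) / 2 := by
      have h4 : (∑ i, (fun i => pmOne (τ i) * pmOne (σs i)) i) = S τ := rfl
      rw [h4] at h2
      linarith
    rw [h3]
  set ν : ℝ := μr * Nr with hνdef
  set t₀ : ℝ := ν - δ * (nr * sq) with ht₀def
  have expbound : ∀ b d : ℝ, 0 ≤ d → d * (nr * sq) ≤ b →
      Real.exp (-(b ^ 2 / (2 * Nr))) ≤ Real.exp (-(d ^ 2 * nr)) := by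
    intro b d hd hb
    apply Real.exp_le_exp.mpr
    rw [neg_le_neg_iff, le_div_iff₀ (by positivity)]
    have hb0 : (0:ℝ) ≤ d * (nr * sq) := by positivity
    have hbsq : (d * (nr * sq)) ^ 2 ≤ b ^ 2 := by
      have := pow_le_pow_left₀ hb0 hb 2
      exact this
    have e2 : (d * (nr * sq)) ^ 2 = d ^ 2 * nr ^ 3 := by
      have : (d * (nr * sq)) ^ 2 = d ^ 2 * nr ^ 2 * sq ^ 2 := by ring
      rw [this, hsqsq]; ring
    have e1 : d ^ 2 * nr * (2 * Nr) = d ^ 2 * nr ^ 3 - d ^ 2 * nr ^ 2 := by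
      simp only [hNrdef]; ring
    have e3 : (0:ℝ) ≤ d ^ 2 * nr ^ 2 := by positivity
    linarith
  set E₀ : Set (Pairs (2*m) → ℝ) :=
    {A | -t₀ ≤ ∑ p : Pairs (2*m), (-(cf σs p)) * A p} with hE₀def
  set Eτ : (Fin (2*m) → Bool) → Set (Pairs (2*m) → ℝ) :=
    fun τ => {A | t₀ ≤ ∑ p : Pairs (2*m), cf τ p * A p} with hEτdef
  set B : Finset (Fin (2*m) → Bool) :=
    (Bal (2*m)).filter (fun τ => ¬ (ε * (2 * (m:ℝ)) ≤ |S τ|)) with hBdef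
  set U : Set (Pairs (2*m) → ℝ) := E₀ ∪ ⋃ τ ∈ B, Eτ τ with hUdef
  have hmeasE : ∀ (cvec : Pairs (2*m) → ℝ) (u : ℝ),
      MeasurableSet {A : Pairs (2*m) → ℝ | u ≤ ∑ p, cvec p * A p} := by
    intro cvec u
    have : Measurable fun A : Pairs (2*m) → ℝ => ∑ p, cvec p * A p :=
      Finset.measurable_sum _ fun p _ => (measurable_pi_apply p).const_mul _
    exact measurableSet_le measurable_const this
  have hUmeas : MeasurableSet U :=
    (hmeasE _ _).union (MeasurableSet.biUnion B.countable_toSet fun τ _ => hmeasE _ _)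
  have hSself : S σs = nr := by
    rw [hSdef, ← hone]
    exact Finset.sum_congr rfl fun i _ => by
      have := pmOne_sq (σs i); nlinarith [this]
  have hMself : ∑ p : Pairs (2*m), cf σs p * mv p = ν := by
    rw [hMsum σs, hSself, hνdef, hNrdef]
  have hincl : {A | ¬ (ε * (2*(m:ℝ)) ≤ |∑ i, pmOne (σh A i) * pmOne (σs i)|)} ⊆ U := by
    intro A hA
    simp only [Set.mem_setOf_eq] at hA
    by_cases hc : t₀ ≤ ∑ p : Pairs (2*m), cf (σh A) p * A p
    · refine Set.mem_union_right _ ?_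
      have hτB : σh A ∈ B := by
        rw [hBdef, Finset.mem_filter]
        exact ⟨(hargmax A).1, by simpa [hSdef] using hA⟩
      exact Set.mem_biUnion hτB hc
    · refine Set.mem_union_left _ ?_
      simp only [hE₀def, Set.mem_setOf_eq]
      have h1 : ∑ p : Pairs (2*m), (-(cf σs p)) * A p
          = -∑ p : Pairs (2*m), cf σs p * A p := by
        rw [← Finset.sum_neg_distrib]
        exact Finset.sum_congr rfl fun p _ => by ring
      rw [h1, neg_le_neg_iff]
      have h2 := (hargmax A).2 σs hσs
      have h3 : ∀ τ : Fin (2*m) → Bool,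
          ∑ p : Pairs (2*m), A p * (pmOne (τ p.1.1) * pmOne (τ p.1.2))
            = ∑ p : Pairs (2*m), cf τ p * A p :=
        fun τ => Finset.sum_congr rfl fun p _ => by rw [hcfdef, mul_comm]
      rw [h3, h3] at h2
      push_neg at hc
      linarith
  have hπeq : sbmComp (gaussianReal (μ / Real.sqrt (2*(m:ℝ))) 1)
        (gaussianReal (-(μ / Real.sqrt (2*(m:ℝ)))) 1) σs
      = Measure.pi (fun p : Pairs (2*m) => gaussianReal (mv p) 1) := by
    rw [show μ / Real.sqrt (2*(m:ℝ)) = μr from rfl]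
    exact sbmComp_eq_pi μr σs
  have hb0 : Measure.pi (fun p : Pairs (2*m) => gaussianReal (mv p) 1) E₀
      ≤ ENNReal.ofReal (Real.exp (-(δ^2 * nr))) := by
    have hMneg : ∑ p : Pairs (2*m), (-(cf σs p)) * mv p = -ν := by
      rw [← hMself, ← Finset.sum_neg_distrib]
      exact Finset.sum_congr rfl fun p _ => by ring
    have hVneg : ∑ p : Pairs (2*m), (-(cf σs p)) ^ 2 = Nr := by
      rw [← hVsum σs]; exact Finset.sum_congr rfl fun p _ => by ring
    have hu : ∑ p : Pairs (2*m), (-(cf σs p)) * mv p ≤ -t₀ := by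
      rw [hMneg, ht₀def]
      have : (0:ℝ) ≤ δ * (nr * sq) := by positivity
      linarith
    have h := gaussian_chernoff (fun p => -(cf σs p)) mv (-t₀) hu
      (by rw [show ∑ p : Pairs (2*m), (-(cf σs p)) ^ 2 = Nr from hVneg]; exact hNrpos)
    rw [hMneg, hVneg] at h
    refine h.trans (ENNReal.ofReal_le_ofReal ?_)
    have harg : -t₀ - -ν = δ * (nr * sq) := by rw [ht₀def]; ring
    rw [harg]
    exact expbound _ δ hδ.le le_rfl
  have hbτ : ∀ τ ∈ B, Measure.pi (fun p : Pairs (2*m) => gaussianReal (mv p) 1) (Eτ τ)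
      ≤ ENNReal.ofReal (Real.exp (-(g^2 * nr))) := by
    intro τ hτ
    rw [hBdef, Finset.mem_filter] at hτ
    have hSbound : S τ ^ 2 ≤ ε^2 * nr^2 := by
      have h1 : |S τ| < ε * (2 * (m:ℝ)) := not_le.mp hτ.2
      have h2 : (0:ℝ) ≤ |S τ| := abs_nonneg _
      have h3 : S τ ^ 2 = |S τ|^2 := (sq_abs _).symm
      have h4 : |S τ| ^ 2 ≤ (ε * (2*(m:ℝ))) ^ 2 := pow_le_pow_left₀ h2 h1.le 2
      rw [h3, show ε^2*nr^2 = (ε * (2*(m:ℝ))) ^ 2 by rw [hnrdef]; ring]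
      exact h4
    have e3 : μr * ((nr^2 - ε^2*nr^2)/2) = (μ * (1-ε^2)/2) * (nr * sq) := by
      rw [hμrdef]
      rw [div_mul_eq_mul_div, div_eq_iff (ne_of_gt hsqpos)]
      have : nr ^ 2 = nr * sq ^ 2 := by rw [hsqsq]; ring
      rw [this]; ring
    have hgap2 : g * (nr * sq) ≤ t₀ - μr * ((S τ ^ 2 - nr)/2) := by
      have e1 : t₀ - μr * ((S τ ^ 2 - nr)/2) = μr * ((nr^2 - S τ ^2)/2) - δ * (nr * sq) := by
        rw [ht₀def, hνdef, hNrdef]; ring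
      have e2 : μr * ((nr^2 - ε^2*nr^2)/2) ≤ μr * ((nr^2 - S τ ^2)/2) := by
        apply mul_le_mul_of_nonneg_left _ hμrpos.le
        linarith
      have e4 : (0:ℝ) ≤ nr * sq := by positivity
      have e5 : (g + δ) * (nr * sq) ≤ (μ * (1-ε^2)/2) * (nr * sq) := by
        apply mul_le_mul_of_nonneg_right _ e4
        linarith
      linarith
    have hu : ∑ p : Pairs (2*m), cf τ p * mv p ≤ t₀ := by
      rw [hMsum τ]
      have hpos : (0:ℝ) ≤ g * (nr * sq) := by positivity
      have h6 := le_trans hpos hgap2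
      linarith
    have h := gaussian_chernoff (cf τ) mv t₀ hu
      (by rw [show ∑ p : Pairs (2*m), (cf τ p) ^ 2 = Nr from hVsum τ]; exact hNrpos)
    rw [hMsum τ, hVsum τ] at h
    refine h.trans (ENNReal.ofReal_le_ofReal ?_)
    exact expbound _ g hgpos.le (by linarith)
  refine ⟨U, hUmeas, ?_, ?_⟩
  · exact hincl
  · rw [hπeq]
    have hcardB : (B.card : ℝ≥0∞) ≤ ((2^(2*m) : ℕ) : ℝ≥0∞) := by
      norm_cast
      calc B.card ≤ Fintype.card (Fin (2*m) → Bool) := Finset.card_le_univ B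
      _ = 2^(2*m) := by simp [Fintype.card_fun]
    have hpow : ((2:ℝ))^(2*m) = Real.exp (nr * Real.log 2) := by
      rw [← hnrcast, ← Real.exp_log (show (0:ℝ) < 2 by norm_num)]
      rw [← Real.exp_nat_mul]
      congr 1
      rw [Real.exp_log (show (0:ℝ) < 2 by norm_num)]
    have step : Measure.pi (fun p : Pairs (2*m) => gaussianReal (mv p) 1) U
        ≤ ENNReal.ofReal (Real.exp (-(δ^2 * nr))) + ENNReal.ofReal (Real.exp (-(δ^2 * nr))) := by
      calc Measure.pi (fun p : Pairs (2*m) => gaussianReal (mv p) 1) U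
          ≤ Measure.pi (fun p : Pairs (2*m) => gaussianReal (mv p) 1) E₀
            + Measure.pi (fun p : Pairs (2*m) => gaussianReal (mv p) 1) (⋃ τ ∈ B, Eτ τ) :=
            measure_union_le _ _
      _ ≤ ENNReal.ofReal (Real.exp (-(δ^2 * nr)))
            + ∑ τ ∈ B, Measure.pi (fun p : Pairs (2*m) => gaussianReal (mv p) 1) (Eτ τ) :=
            add_le_add hb0 (measure_biUnion_finset_le _ _)
      _ ≤ ENNReal.ofReal (Real.exp (-(δ^2 * nr)))
            + ∑ _τ ∈ B, ENNReal.ofReal (Real.exp (-(g^2 * nr))) :=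
            add_le_add le_rfl (Finset.sum_le_sum hbτ)
      _ = ENNReal.ofReal (Real.exp (-(δ^2 * nr)))
            + (B.card : ℝ≥0∞) * ENNReal.ofReal (Real.exp (-(g^2 * nr))) := by
            rw [Finset.sum_const, nsmul_eq_mul]
      _ ≤ ENNReal.ofReal (Real.exp (-(δ^2 * nr)))
            + ((2^(2*m) : ℕ) : ℝ≥0∞) * ENNReal.ofReal (Real.exp (-(g^2 * nr))) := by
            gcongr
      _ ≤ ENNReal.ofReal (Real.exp (-(δ^2 * nr))) + ENNReal.ofReal (Real.exp (-(δ^2 * nr))) := by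
            gcongr
            rw [← ENNReal.ofReal_natCast (2^(2*m)), ← ENNReal.ofReal_mul (by positivity)]
            apply ENNReal.ofReal_le_ofReal
            push_cast
            rw [hpow, ← Real.exp_add]
            apply Real.exp_le_exp.mpr
            nlinarith
    refine step.trans ?_
    rw [← ENNReal.ofReal_add (Real.exp_nonneg _) (Real.exp_nonneg _), ← two_mul]


lemma sbmComp_isProb {α : Type*} [MeasurableSpace α] (P Q : Measure α)
    [IsProbabilityMeasure P] [IsProbabilityMeasure Q] {n : ℕ} (σ : Fin n → Bool) :
    IsProbabilityMeasure (sbmComp P Q σ) := by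
  unfold sbmComp
  haveI : ∀ p : Pairs n, IsProbabilityMeasure (if σ p.1.1 = σ p.1.2 then P else Q) :=
    fun p => by split <;> infer_instance
  infer_instance

lemma sbmJoint_bound (P Q : Measure ℝ) [IsProbabilityMeasure P] [IsProbabilityMeasure Q]
    (n : ℕ) (S : Set ((Fin n → Bool) × (Pairs n → ℝ))) (bound : ℝ≥0∞)
    (h : ∀ σs ∈ Bal n, ∃ U : Set (Pairs n → ℝ), MeasurableSet U ∧
         {A | (σs, A) ∈ S} ⊆ U ∧ sbmComp P Q σs U ≤ bound) :
    sbmJoint P Q n S ≤ bound := by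
  rw [sbmJoint, Measure.smul_apply, Measure.finset_sum_apply, smul_eq_mul]
  have hterm : ∀ σs ∈ Bal n, ((Measure.dirac σs).prod (sbmComp P Q σs)) S ≤ bound := by
    intro σs hσs
    obtain ⟨U, hU, hsub, hb⟩ := h σs hσs
    haveI := sbmComp_isProb P Q σs
    have hSsub : S ⊆ ({σs}ᶜ ×ˢ (Set.univ : Set (Pairs n → ℝ)))
        ∪ ((Set.univ : Set (Fin n → Bool)) ×ˢ U) := by
      intro x hx
      by_cases hx1 : x.1 = σs
      · refine Or.inr ⟨trivial, hsub ?_⟩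
        show (σs, x.2) ∈ S
        rw [← hx1]
        simpa using hx
      · exact Or.inl ⟨hx1, trivial⟩
    calc ((Measure.dirac σs).prod (sbmComp P Q σs)) S
        ≤ ((Measure.dirac σs).prod (sbmComp P Q σs))
            (({σs}ᶜ ×ˢ Set.univ) ∪ (Set.univ ×ˢ U)) := measure_mono hSsub
    _ ≤ ((Measure.dirac σs).prod (sbmComp P Q σs)) ({σs}ᶜ ×ˢ Set.univ)
          + ((Measure.dirac σs).prod (sbmComp P Q σs)) (Set.univ ×ˢ U) :=
        measure_union_le _ _
    _ = Measure.dirac σs {σs}ᶜ * sbmComp P Q σs Set.univ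
          + Measure.dirac σs Set.univ * sbmComp P Q σs U := by
        rw [Measure.prod_prod, Measure.prod_prod]
    _ ≤ bound := by
        have h1 : Measure.dirac σs ({σs}ᶜ : Set (Fin n → Bool)) = 0 := by
          rw [Measure.dirac_apply]
          simp
        rw [h1, zero_mul, zero_add, measure_univ, one_mul]
        exact hb
  calc (↑(Bal n).card)⁻¹ * ∑ σs ∈ Bal n, ((Measure.dirac σs).prod (sbmComp P Q σs)) S
      ≤ (↑(Bal n).card)⁻¹ * ∑ _σs ∈ Bal n, bound := by
        gcongr with σs hσs
        exact hterm σs hσs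
  _ = (↑(Bal n).card)⁻¹ * ((Bal n).card * bound) := by rw [Finset.sum_const, nsmul_eq_mul]
  _ ≤ bound := by
      rcases eq_or_ne (((Bal n).card : ℝ≥0∞)) 0 with h0 | h0
      · rw [h0]; simp
      · rw [← mul_assoc, ENNReal.inv_mul_cancel h0 (ENNReal.natCast_ne_top _), one_mul]

lemma sbmJoint_univ (P Q : Measure ℝ) [IsProbabilityMeasure P] [IsProbabilityMeasure Q]
    (n : ℕ) (hne : (Bal n).Nonempty) : sbmJoint P Q n Set.univ = 1 := by
  rw [sbmJoint, Measure.smul_apply, Measure.finset_sum_apply, smul_eq_mul]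
  have : ∀ σs ∈ Bal n, ((Measure.dirac σs).prod (sbmComp P Q σs)) Set.univ = 1 := by
    intro σs _
    haveI := sbmComp_isProb P Q σs
    exact measure_univ
  rw [Finset.sum_congr rfl this, Finset.sum_const, nsmul_eq_mul, mul_one,
    ENNReal.inv_mul_cancel
      (by exact_mod_cast (Finset.card_pos.mpr hne).ne') (ENNReal.natCast_ne_top _)]

lemma bal_nonempty (m : ℕ) : (Bal (2*m)).Nonempty := by
  refine ⟨fun i : Fin (2*m) => decide ((i:ℕ) < m), ?_⟩
  rw [Bal, Finset.mem_filter]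
  refine ⟨Finset.mem_univ _, ?_⟩
  have hcard : (Finset.univ.filter fun i : Fin (2*m) => (decide ((i:ℕ) < m)) = true).card = m := by
    apply Finset.card_eq_of_bijective (fun k hk => (⟨k, by omega⟩ : Fin (2*m)))
    · intro a ha
      rw [Finset.mem_filter, decide_eq_true_eq] at ha
      exact ⟨(a:ℕ), ha.2, Fin.ext rfl⟩
    · intro i hi
      simp only [Finset.mem_filter, decide_eq_true_eq]
      exact ⟨Finset.mem_univ _, hi⟩
    · intro i j hi hj hij
      simpa [Fin.ext_iff] using hij
  rw [hcard]


set_option maxHeartbeats 1000000 in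
/-- Gaussian binary symmetric community model with `n = 2m` even: `σ*` is
uniform over balanced sign vectors and `A = (μ/√n)(σ*σ*ᵀ − I) + W`, so that the above-diagonal
entries satisfy `A_ij ~ N(μ σ*_i σ*_j/√n, 1)` independently (planted joint law `sbmJoint`).
Let `σ̂_ML` be any maximizer of `T(σ) = ∑_{i<j} A_ij σ_i σ_j` over balanced sign vectors.
If `μ > 2√(log 2)` then for every `ε > 0` with `μ(1−ε²) > 2√(log 2)` the probability
`P[|⟨σ̂_ML, σ*⟩| ≥ εn]` tends to `1`; in fact the complementary probability is `e^{−Ω(n)}`.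
Hence the MLE achieves correlated recovery. -/
theorem gaussian_mle_correlated_recovery
    (μ : ℝ) (hμ : 2 * Real.sqrt (Real.log 2) < μ)
    (σhat : (m : ℕ) → ((Pairs (2 * m) → ℝ) → (Fin (2 * m) → Bool)))
    (hargmax : ∀ (m : ℕ) (A : Pairs (2 * m) → ℝ),
      σhat m A ∈ Bal (2 * m) ∧
      ∀ σ ∈ Bal (2 * m),
        (∑ p : Pairs (2 * m), A p * (pmOne (σ p.1.1) * pmOne (σ p.1.2)))
          ≤ ∑ p : Pairs (2 * m), A p * (pmOne (σhat m A p.1.1) * pmOne (σhat m A p.1.2)))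
    (ε : ℝ) (hε : 0 < ε) (hεμ : 2 * Real.sqrt (Real.log 2) < μ * (1 - ε ^ 2)) :
    Tendsto (fun m : ℕ =>
        sbmJoint (gaussianReal (μ / Real.sqrt (2 * m)) 1)
            (gaussianReal (-(μ / Real.sqrt (2 * m))) 1) (2 * m)
          {x | ε * (2 * m) ≤ |∑ i, pmOne (σhat m x.2 i) * pmOne (x.1 i)|})
      atTop (nhds 1) ∧
    ∃ c : ℝ, 0 < c ∧ ∀ᶠ m : ℕ in atTop,
      sbmJoint (gaussianReal (μ / Real.sqrt (2 * m)) 1)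
          (gaussianReal (-(μ / Real.sqrt (2 * m))) 1) (2 * m)
        {x | ¬ (ε * (2 * m) ≤ |∑ i, pmOne (σhat m x.2 i) * pmOne (x.1 i)|)}
      ≤ ENNReal.ofReal (Real.exp (-(c * (2 * m)))) := by
  classical
  have hκ : (0:ℝ) ≤ Real.sqrt (Real.log 2) := Real.sqrt_nonneg _
  have hμpos : 0 < μ := lt_of_le_of_lt (by positivity) hμ
  set δ : ℝ := (μ * (1 - ε^2)/2 - Real.sqrt (Real.log 2))/2 with hδdef
  have hδ : 0 < δ := by rw [hδdef]; linarith
  have hgap : Real.sqrt (Real.log 2) + δ ≤ μ * (1-ε^2)/2 - δ := by rw [hδdef]; linarith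
  set c : ℝ := δ^2/2 with hcdef
  have hc : 0 < c := by positivity
  set N₀ : ℕ := max 1 ⌈Real.log 2 / δ^2⌉₊ with hN₀def
  -- second part bound
  have key : ∀ m : ℕ, N₀ ≤ m →
      sbmJoint (gaussianReal (μ / Real.sqrt (2 * m)) 1)
          (gaussianReal (-(μ / Real.sqrt (2 * m))) 1) (2 * m)
        {x | ¬ (ε * (2 * m) ≤ |∑ i, pmOne (σhat m x.2 i) * pmOne (x.1 i)|)}
      ≤ ENNReal.ofReal (Real.exp (-(c * (2 * m)))) := by
    intro m hm
    have hm1 : 1 ≤ m := le_trans (le_max_left _ _) hm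
    have hlogm : Real.log 2 ≤ δ^2 * m := by
      have h1 : (⌈Real.log 2 / δ^2⌉₊ : ℝ) ≤ m := by
        exact_mod_cast le_trans (le_max_right 1 _) hm
      have h2 : Real.log 2 / δ^2 ≤ (m:ℝ) := le_trans (Nat.le_ceil _) h1
      calc Real.log 2 = (Real.log 2 / δ^2) * δ^2 := by field_simp
      _ ≤ (m:ℝ) * δ^2 := mul_le_mul_of_nonneg_right h2 (by positivity)
      _ = δ^2 * m := by ring
    have h2exp : 2 * Real.exp (-(δ^2 * (2*(m:ℝ)))) ≤ Real.exp (-(c * (2*(m:ℝ)))) := by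
      calc 2 * Real.exp (-(δ^2 * (2*(m:ℝ))))
          = Real.exp (Real.log 2) * Real.exp (-(δ^2 * (2*(m:ℝ)))) := by
            rw [Real.exp_log two_pos]
      _ = Real.exp (Real.log 2 + -(δ^2 * (2*(m:ℝ)))) := (Real.exp_add _ _).symm
      _ ≤ Real.exp (-(c * (2*(m:ℝ)))) := by
            apply Real.exp_le_exp.mpr
            rw [hcdef]
            linarith
    apply sbmJoint_bound
    intro σs hσs
    obtain ⟨U, hU, hsub, hb⟩ := per_sigma_bound μ ε δ hμpos hδ hgap m hm1 (σhat m)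
      (hargmax m) σs hσs
    exact ⟨U, hU, hsub, hb.trans (ENNReal.ofReal_le_ofReal h2exp)⟩
  refine ⟨?_, c, hc, Filter.eventually_atTop.mpr ⟨N₀, key⟩⟩
  -- tendsto part
  set a : ℕ → ℝ≥0∞ := fun m =>
    sbmJoint (gaussianReal (μ / Real.sqrt (2 * m)) 1)
        (gaussianReal (-(μ / Real.sqrt (2 * m))) 1) (2 * m)
      {x | ¬ (ε * (2 * m) ≤ |∑ i, pmOne (σhat m x.2 i) * pmOne (x.1 i)|)} with hadef
  have ha0 : Tendsto a atTop (nhds 0) := by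
    have hub : Tendsto (fun m : ℕ => ENNReal.ofReal (Real.exp (-(c * (2 * (m:ℝ)))))) atTop (nhds 0) := by
      have h1 : Tendsto (fun m : ℕ => -(c * (2 * (m:ℝ)))) atTop atBot := by
        have h2 : Tendsto (fun m : ℕ => (m:ℝ)) atTop atTop := tendsto_natCast_atTop_atTop
        have h3 : Tendsto (fun m : ℕ => (2*c) * (m:ℝ)) atTop atTop :=
          h2.const_mul_atTop (by positivity)
        have h4 := tendsto_neg_atTop_atBot.comp h3
        refine h4.congr fun m => ?_
        simp only [Function.comp_apply]
        ring
      have h5 := Real.tendsto_exp_atBot.comp h1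
      have h6 := (ENNReal.continuous_ofReal.tendsto 0).comp h5
      simpa [Function.comp_def] using h6
    refine tendsto_of_tendsto_of_tendsto_of_le_of_le' tendsto_const_nhds hub ?_ ?_
    · exact Filter.Eventually.of_forall fun m => zero_le
    · exact Filter.eventually_atTop.mpr ⟨N₀, key⟩
  have huniv : ∀ m : ℕ, sbmJoint (gaussianReal (μ / Real.sqrt (2 * m)) 1)
      (gaussianReal (-(μ / Real.sqrt (2 * m))) 1) (2 * m) Set.univ = 1 :=
    fun m => sbmJoint_univ _ _ _ (bal_nonempty m)
  have hlowlim : Tendsto (fun m : ℕ => 1 - a m) atTop (nhds 1) := by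
    have := ENNReal.Tendsto.sub (tendsto_const_nhds (x := (1:ℝ≥0∞))) ha0
      (Or.inl ENNReal.one_ne_top)
    simpa using this
  refine tendsto_of_tendsto_of_tendsto_of_le_of_le' hlowlim tendsto_const_nhds
    (Filter.Eventually.of_forall fun m => ?_) (Filter.Eventually.of_forall fun m => ?_)
  · simp only [hadef]
    rw [tsub_le_iff_right, ← huniv m]
    refine le_trans (measure_mono ?_) (measure_union_le _ _)
    intro x _
    by_cases hx : ε * (2 * (m:ℝ)) ≤ |∑ i, pmOne (σhat m x.2 i) * pmOne (x.1 i)|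
    · exact Or.inl hx
    · exact Or.inr hx
  · rw [← huniv m]
    exact measure_mono (Set.subset_univ _)
end
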